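/- Let (A,∘,[·,·]) be a Gel'fand-Dorfman bialgebra over K of codimension 1 in a vector space E. Assume the Lie algebra (A,[·,·]) is perfect, i.e. [A,A] = A, and that every derivation of the Lie algebra (A,[·,·]) is inner (of the form [a0,·] for some a0 ∈ A). Then Extd(E,A) is in bijection with SF4(A)/≡, where SF4(A) is the set of GD flag datums with p = q = η = 0 and D = 0, written (S,T,a1,k), and (S,T,a1,k) ≡ (S',T',a1',k') iff there exists (a0,β) ∈ A × K* with S(a) = βS'(a) + a0∘a for all a, T(a) = βT'(a) + a∘a0 for all a, a1 = a0∘a0 + βS'(a0) + βT'(a0) + β²a1' − k a0, k = βk', and [a0,a] = 0 for all a ∈ A. -/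

import Mathlib

namespace GDExt

def IsNovikov {M : Type*} [AddCommGroup M] (mul : M → M → M) : Prop :=
  (∀ a b c, mul (mul a b) c - mul a (mul b c) = mul (mul b a) c - mul b (mul a c)) ∧
  ∀ a b c, mul (mul a b) c = mul (mul a c) b

def IsLieBracket {M : Type*} [AddCommGroup M] (br : M → M → M) : Prop :=
  (∀ a, br a a = 0) ∧ ∀ a b c, br a (br b c) = br (br a b) c + br b (br a c)

def IsGD {M : Type*} [AddCommGroup M] (mul br : M → M → M) : Prop :=
  IsNovikov mul ∧ IsLieBracket br ∧
  ∀ a b c, br a (mul b c) - br c (mul b a) + mul (br b a) c - mul (br b c) a - mul b (br a c) = 0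

variable {K : Type*} [Field K]
variable {A V : Type*} [AddCommGroup A] [Module K A] [AddCommGroup V] [Module K V]

/-- First component bilinear product of the unified product `A ♮ V`. -/
def uniMul (circ : A →ₗ[K] A →ₗ[K] A) (lA rA : A →ₗ[K] Module.End K V)
    (lV rV : V →ₗ[K] Module.End K A) (f : V →ₗ[K] V →ₗ[K] A)
    (st : V →ₗ[K] V →ₗ[K] V) : A × V → A × V → A × V :=
  fun p q =>
    (circ p.1 q.1 + lV p.2 q.1 + rV q.2 p.1 + f p.2 q.2,
     st p.2 q.2 + lA p.1 q.2 + rA q.1 p.2)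

/-- Bracket of the unified product `A ♮ V`. -/
def uniBr (brk : A →ₗ[K] A →ₗ[K] A) (tl : V →ₗ[K] A →ₗ[K] V) (tr : V →ₗ[K] A →ₗ[K] A)
    (hm : V →ₗ[K] V →ₗ[K] A) (vbr : V →ₗ[K] V →ₗ[K] V) : A × V → A × V → A × V :=
  fun p q =>
    (brk p.1 q.1 + tr p.2 q.1 - tr q.2 p.1 + hm p.2 q.2,
     vbr p.2 q.2 + tl p.2 q.1 - tl q.2 p.1)

end GDExt

namespace GDExt

variable (K : Type*) [Field K]
variable (A : Type*) [AddCommGroup A] [Module K A]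

/-- The data of a Gel'fand-Dorfman flag datum. -/
structure FlagData where
  p : A →ₗ[K] K
  q : A →ₗ[K] K
  S : A →ₗ[K] A
  T : A →ₗ[K] A
  a1 : A
  k : K
  eta : A →ₗ[K] K
  D : A →ₗ[K] A

variable {K A}

/-- Conditions (FN1)-(FN10), (TD1)-(TD2) and (GF1)-(GF6) for a GD flag datum of the
GD bialgebra `(A, circ, brk)`. -/
def IsFlagDatum (circ brk : A →ₗ[K] A →ₗ[K] A) (d : FlagData K A) : Prop :=
  -- (FN1)
  (∀ a b : A, d.p (circ a b) = d.p (circ b a)) ∧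
  (∀ a b : A, d.q (circ a b) = d.q a * d.q b) ∧
  -- (FN2)
  (∀ a b : A, d.S (circ a b) = circ (d.S a) b + circ a (d.S b) + (d.q a - d.p a) • d.S b
      + d.q b • d.T a - circ (d.T a) b) ∧
  -- (FN3)
  (∀ a b : A, d.T (circ a b) - d.T (circ b a)
      = d.p b • d.T a - d.p a • d.T b + circ a (d.T b) - circ b (d.T a)) ∧
  -- (FN4)
  (∀ a : A, d.T (d.T a) = d.T (d.S a) - d.S (d.T a) + circ a d.a1
      + (d.q a - 2 * d.p a) • d.a1 + d.k • d.T a) ∧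
  -- (FN5)
  (∀ a : A, d.p (d.S a) - d.p (d.T a) = d.q (d.T a) + d.k * (d.p a - d.q a)) ∧
  -- (FN6)
  (∀ a b : A, circ (d.S a) b + d.q a • d.S b = circ (d.S b) a + d.q b • d.S a) ∧
  -- (FN7)
  (∀ a b : A, d.T (circ a b) = circ (d.T a) b + d.p a • d.S b) ∧
  -- (FN8)
  (∀ a b : A, d.p (circ a b) = d.p a * d.q b) ∧
  -- (FN9)
  (∀ a : A, d.T (d.S a) = circ d.a1 a + d.k • d.S a - d.q a • d.a1) ∧
  -- (FN10)
  (∀ a : A, d.p (d.S a) = 0) ∧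
  -- (TD1)
  (∀ a b : A, d.eta (brk a b) = 0) ∧
  -- (TD2)
  (∀ a b : A, d.D (brk a b) = brk (d.D a) b + brk a (d.D b) + d.eta a • d.D b - d.eta b • d.D a) ∧
  -- (GF1)
  (∀ a b : A, brk a (d.T b) - d.p b • d.D a - d.D (circ b a) + d.T (brk b a)
      + circ (d.D b) a + d.eta b • d.S a + circ b (d.D a) + d.eta a • d.T b = 0) ∧
  -- (GF2)
  (∀ a b : A, d.p (brk b a) + d.eta b * d.q a - d.eta (circ b a) = 0) ∧
  -- (GF3)
  (∀ a b : A, brk a (d.S b) - d.q b • d.D a - brk b (d.S a) + d.q a • d.D b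
      + circ (d.D a) b + d.eta a • d.S b - circ (d.D b) a - d.eta b • d.S a
      - d.S (brk a b) = 0) ∧
  -- (GF4)
  (∀ a b : A, d.q (brk a b) = 0) ∧
  -- (GF5)
  (∀ a : A, brk a d.a1 - d.k • d.D a - d.D (d.S a) + d.T (d.D a)
      + (2 * d.eta a) • d.a1 + d.S (d.D a) = 0) ∧
  -- (GF6)
  (∀ a : A, d.k * d.eta a - d.eta (d.S a) + d.p (d.D a) + d.q (d.D a) = 0)

end GDExt

namespace GDExt

variable {K E : Type*} [Field K] [AddCommGroup E] [Module K E]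

/-- The GD bialgebra structures on `E` containing the GD bialgebra `(A, circ, brk)`
as a subalgebra (i.e. restricting to the given operations on `A`). -/
def GDStrOn (A : Submodule K E) (circ brk : ↥A →ₗ[K] ↥A →ₗ[K] ↥A) : Type _ :=
  {s : (E →ₗ[K] E →ₗ[K] E) × (E →ₗ[K] E →ₗ[K] E) //
    IsGD (fun u v => s.1 u v) (fun u v => s.2 u v) ∧
    ∀ a b : ↥A, s.1 a b = ((circ a b : ↥A) : E) ∧ s.2 a b = ((brk a b : ↥A) : E)}

/-- Equivalence of GD bialgebra structures on `E` containing `A` as a subalgebra: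
there is a GD bialgebra isomorphism whose restriction to `A` is the identity. -/
def GDStrEquiv (A : Submodule K E) (circ brk : ↥A →ₗ[K] ↥A →ₗ[K] ↥A)
    (s s' : GDStrOn A circ brk) : Prop :=
  ∃ φ : E ≃ₗ[K] E,
    (∀ u v : E, φ (s.1.1 u v) = s'.1.1 (φ u) (φ v)) ∧
    (∀ u v : E, φ (s.1.2 u v) = s'.1.2 (φ u) (φ v)) ∧
    (∀ a : ↥A, φ (a : E) = (a : E))

end GDExt

/-!
Split `E = A ⊕ K x` and transport every GD structure on `E` extending `A` to `A × K`. Jacobi shows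
that the `K`-component of `[(0, 1), (a, 0)]` vanishes on brackets, hence on the perfect algebra
`A`; the `A`-component is then a derivation, hence `[a0, ·]`, and replacing `x` by `x - a0` makes
the new unit central for the bracket. The compatibility condition and perfectness then kill the
`K`-components of `x ∘ a` and `a ∘ x`, so the structure is the unified product `A ♮ K` of a datum
`(S, T, a1, k)` in `SF4(A)`; conversely the GD axioms for `A ♮ K` are exactly the conditions of
`SF4(A)`. Finally, an isomorphism fixing `A` between two unified products is a shear
`(a, r) ↦ (a + r a0, β r)`, and a shear is a homomorphism exactly when the data are related by `≡`.
-/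

namespace GDExt

section Transport
variable {R : Type*} [CommRing R] {M N P : Type*} [AddCommGroup M] [Module R M]
  [AddCommGroup N] [Module R N] [AddCommGroup P] [Module R P]

def Intertwines (f : M → N) (m : M →ₗ[R] M →ₗ[R] M) (n : N →ₗ[R] N →ₗ[R] N) : Prop :=
  ∀ u v, f (m u v) = n (f u) (f v)

theorem Intertwines.comp {g : N → P} {f : M → N} {m : M →ₗ[R] M →ₗ[R] M}
    {n : N →ₗ[R] N →ₗ[R] N} {p : P →ₗ[R] P →ₗ[R] P} (hg : Intertwines g n p)
    (hf : Intertwines f m n) : Intertwines (g ∘ f) m p := fun u v => by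
  simp only [Function.comp_apply, hf u v, hg (f u) (f v)]

theorem Intertwines.symm {e : M ≃ₗ[R] N} {m : M →ₗ[R] M →ₗ[R] M} {n : N →ₗ[R] N →ₗ[R] N}
    (h : Intertwines e m n) : Intertwines e.symm n m := fun u v => by
  rw [e.symm_apply_eq, h, e.apply_symm_apply, e.apply_symm_apply]

def pullback₂ (e : M ≃ₗ[R] N) (n : N →ₗ[R] N →ₗ[R] N) : M →ₗ[R] M →ₗ[R] M :=
  (n.compl₁₂ e.toLinearMap e.toLinearMap).compr₂ e.symm.toLinearMap

theorem pullback₂_apply (e : M ≃ₗ[R] N) (n : N →ₗ[R] N →ₗ[R] N) (u v : M) :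
    pullback₂ e n u v = e.symm (n (e u) (e v)) := rfl

theorem intertwines_pullback₂ (e : M ≃ₗ[R] N) (n : N →ₗ[R] N →ₗ[R] N) :
    Intertwines e (pullback₂ e n) n := fun u v => by
  rw [pullback₂_apply, e.apply_symm_apply]

theorem IsLieBracket.anticomm {b : M →ₗ[R] M →ₗ[R] M} (h : IsLieBracket fun u v => b u v)
    (u v : M) : b u v = -b v u := by
  have h2 := h.1 (u + v)
  simp only [map_add, LinearMap.add_apply, h.1 u, h.1 v, zero_add, add_zero] at h2
  exact eq_neg_of_add_eq_zero_left ((add_comm _ _).trans h2)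

theorem IsGD.of_intertwines (e : M ≃ₗ[R] N) {m b : M →ₗ[R] M →ₗ[R] M}
    {m' b' : N →ₗ[R] N →ₗ[R] N} (hm : Intertwines e m m') (hb : Intertwines e b b')
    (h : IsGD (fun u v => m' u v) (fun u v => b' u v)) :
    IsGD (fun u v => m u v) (fun u v => b u v) := by
  obtain ⟨⟨n1, n2⟩, ⟨alt, jac⟩, comp⟩ := h
  unfold Intertwines at hm hb
  refine ⟨⟨fun u v w => e.injective ?_, fun u v w => e.injective ?_⟩,
    ⟨fun u => e.injective ?_, fun u v w => e.injective ?_⟩, fun u v w => e.injective ?_⟩ <;>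
  simp only [map_sub, map_add, map_zero, hm, hb]
  exacts [n1 .., n2 .., alt _, jac .., comp ..]

end Transport

def quotEquivOfRel {α β : Type*} {r : α → α → Prop} {r' : β → β → Prop} (f : α → β)
    (g : β → α) (hf : ∀ a a', r a a' → r' (f a) (f a')) (hg : ∀ b b', r' b b' → r (g b) (g b'))
    (hgf : ∀ a, r (g (f a)) a) (hfg : ∀ b, r' (f (g b)) b) : Quot r ≃ Quot r' where
  toFun := Quot.map f hf
  invFun := Quot.map g hg
  left_inv := Quot.ind fun a => Quot.sound (hgf a)
  right_inv := Quot.ind fun b => Quot.sound (hfg b)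

section FlagAlgebra
variable {K A : Type*} [Field K] [AddCommGroup A] [Module K A] (circ brk : A →ₗ[K] A →ₗ[K] A)

/-- The conditions of `IsFlagDatum` that remain when `p = q = eta = 0` and `D = 0`. -/
structure IsReducedFlag (d : FlagData K A) : Prop where
  fn2 : ∀ a b, d.S (circ a b) = circ (d.S a) b + circ a (d.S b) - circ (d.T a) b
  fn3 : ∀ a b, d.T (circ a b) - d.T (circ b a) = circ a (d.T b) - circ b (d.T a)
  fn4 : ∀ a, d.T (d.T a) = d.T (d.S a) - d.S (d.T a) + circ a d.a1 + d.k • d.T a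
  fn6 : ∀ a b, circ (d.S a) b = circ (d.S b) a
  fn7 : ∀ a b, d.T (circ a b) = circ (d.T a) b
  fn9 : ∀ a, d.T (d.S a) = circ d.a1 a + d.k • d.S a
  gf1 : ∀ a b, brk a (d.T b) + d.T (brk b a) = 0
  gf3 : ∀ a b, brk a (d.S b) - brk b (d.S a) - d.S (brk a b) = 0
  gf5 : ∀ a, brk a d.a1 = 0

abbrev SF4 : Type _ :=
  {d : FlagData K A // IsFlagDatum circ brk d ∧ d.p = 0 ∧ d.q = 0 ∧ d.eta = 0 ∧ d.D = 0}

/-- The product of the unified product `A ♮ K` of a datum with `p = q = eta = 0` and `D = 0`. -/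
def flagMul (d : FlagData K A) : A × K →ₗ[K] A × K →ₗ[K] A × K :=
  LinearMap.mk₂ K
    (fun p q =>
      (circ p.1 q.1 + p.2 • d.S q.1 + q.2 • d.T p.1 + (p.2 * q.2) • d.a1, p.2 * q.2 * d.k))
    (fun _ _ _ => by
      ext <;> simp only [Prod.fst_add, Prod.snd_add, map_add, LinearMap.add_apply] <;>
        first | module | ring)
    (fun _ _ _ => by
      ext <;> simp only [Prod.smul_fst, Prod.smul_snd, smul_eq_mul, map_smul,
        LinearMap.smul_apply] <;> first | module | ring)
    (fun _ _ _ => by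
      ext <;> simp only [Prod.fst_add, Prod.snd_add, map_add] <;> first | module | ring)
    (fun _ _ _ => by
      ext <;> simp only [Prod.smul_fst, Prod.smul_snd, smul_eq_mul, map_smul] <;>
        first | module | ring)

def flagBr : A × K →ₗ[K] A × K →ₗ[K] A × K :=
  LinearMap.mk₂ K (fun p q => (brk p.1 q.1, 0))
    (fun _ _ _ => by ext <;> simp) (fun _ _ _ => by ext <;> simp)
    (fun _ _ _ => by ext <;> simp) (fun _ _ _ => by ext <;> simp)

@[simp] theorem flagMul_apply (d : FlagData K A) (a b : A) (r t : K) :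
    flagMul circ d (a, r) (b, t) =
      (circ a b + r • d.S b + t • d.T a + (r * t) • d.a1, r * t * d.k) :=
  rfl

@[simp] theorem flagBr_apply (p q : A × K) : flagBr brk p q = (brk p.1 q.1, 0) := rfl

variable {circ brk} {d : FlagData K A}

theorem isFlagDatum_iff_isReducedFlag (hp : d.p = 0) (hq : d.q = 0) (he : d.eta = 0)
    (hD : d.D = 0) : IsFlagDatum circ brk d ↔ IsReducedFlag circ brk d := by
  obtain ⟨p, q, S, T, a1, k, eta, D⟩ := d
  dsimp only at hp hq he hD
  subst hp hq he hD
  constructor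
  · rintro ⟨-, -, f2, f3, f4, -, f6, f7, -, f9, -, -, -, g1, -, g3, -, g5, -⟩
    exact ⟨fun a b => by simpa using f2 a b, fun a b => by simpa using f3 a b,
      fun a => by simpa using f4 a, fun a b => by simpa using f6 a b,
      fun a b => by simpa using f7 a b, fun a => by simpa using f9 a,
      fun a b => by simpa using g1 a b, fun a b => by simpa using g3 a b,
      fun a => by simpa using g5 a⟩
  · intro h
    exact ⟨fun _ _ => by simp, fun _ _ => by simp, fun a b => by simpa using h.fn2 a b,
      fun a b => by simpa using h.fn3 a b, fun a => by simpa using h.fn4 a, fun _ => by simp,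
      fun a b => by simpa using h.fn6 a b, fun a b => by simpa using h.fn7 a b,
      fun _ _ => by simp, fun a => by simpa using h.fn9 a, fun _ => by simp, fun _ _ => by simp,
      fun _ _ => by simp, fun a b => by simpa using h.gf1 a b, fun _ _ => by simp,
      fun a b => by simpa using h.gf3 a b, fun _ _ => by simp, fun a => by simpa using h.gf5 a,
      fun _ => by simp⟩

theorem SF4.isReducedFlag (d : SF4 circ brk) : IsReducedFlag circ brk d.1 :=
  (isFlagDatum_iff_isReducedFlag d.2.2.1 d.2.2.2.1 d.2.2.2.2.1 d.2.2.2.2.2).1 d.2.1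

theorem isGD_flag (hGD : IsGD (fun a b => circ a b) (fun a b => brk a b))
    (hd : IsReducedFlag circ brk d) :
    IsGD (fun p q => flagMul circ d p q) (fun p q => flagBr brk p q) := by
  obtain ⟨⟨n1, n2⟩, ⟨alt, jac⟩, comp⟩ := hGD
  refine ⟨⟨?_, ?_⟩, ⟨?_, ?_⟩, ?_⟩ <;>
  simp only [Prod.forall, flagMul_apply, flagBr_apply, Prod.mk_sub_mk, Prod.mk_add_mk,
    Prod.mk.injEq, Prod.mk_eq_zero, map_add, map_smul, LinearMap.add_apply,
    LinearMap.smul_apply]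
  · intro a s b t c r
    constructor
    · linear_combination (norm := module) n1 a b c - s • hd.fn2 b c + t • hd.fn2 a c
        + r • hd.fn3 a b - (s * r) • hd.fn4 b + (t * r) • hd.fn4 a
    · ring
  · intro a s b t c r
    constructor
    · linear_combination (norm := module) n2 a b c + s • hd.fn6 b c - t • hd.fn7 a c
        + r • hd.fn7 a b - (s * t) • hd.fn9 c + (s * r) • hd.fn9 b
    · ring
  · exact fun a _ => ⟨alt a, trivial⟩
  · exact fun a _ b _ c _ => ⟨jac a b c, by simp⟩
  · intro a s b t c r
    constructor
    · linear_combination (norm := module) comp a b c + t • hd.gf3 a c + r • hd.gf1 a b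
        - s • hd.gf1 c b + (t * r) • hd.gf5 a - (t * s) • hd.gf5 c
    · simp

theorem IsReducedFlag.of_isGD
    (h : IsGD (fun p q => flagMul circ d p q) (fun p q => flagBr brk p q)) :
    IsReducedFlag circ brk d where
  fn2 a b := by
    have := congrArg Prod.fst (h.1.1 (0, 1) (a, 0) (b, 0))
    simp only [flagMul_apply, map_zero, LinearMap.zero_apply, one_smul, zero_add, smul_zero,
      add_zero, mul_zero, zero_smul, zero_mul, Prod.mk_sub_mk, sub_self, mul_one] at this
    linear_combination (norm := module) -this
  fn3 a b := by
    have := congrArg Prod.fst (h.1.1 (a, 0) (b, 0) (0, 1))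
    simp only [flagMul_apply, zero_smul, add_zero, mul_zero, zero_mul, map_zero, smul_zero,
      one_smul, zero_add, mul_one, Prod.mk_sub_mk, sub_self] at this
    linear_combination (norm := module) this
  fn4 a := by
    have := congrArg Prod.fst (h.1.1 (a, 0) (0, 1) (0, 1))
    simp only [flagMul_apply, map_zero, smul_zero, add_zero, one_smul, zero_add, mul_one, zero_smul,
      zero_mul, LinearMap.zero_apply, one_mul, Prod.mk_sub_mk, sub_self, mul_zero] at this
    linear_combination (norm := module) this
  fn6 a b := by
    simpa using congrArg Prod.fst (h.1.2 (0, 1) (a, 0) (b, 0))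
  fn7 a b := by
    have := congrArg Prod.fst (h.1.2 (a, 0) (0, 1) (b, 0))
    simp only [flagMul_apply, map_zero, smul_zero, add_zero, one_smul, zero_add, mul_one, zero_smul,
      zero_mul, mul_zero] at this
    linear_combination (norm := module) -this
  fn9 a := by
    have := congrArg Prod.fst (h.1.2 (0, 1) (a, 0) (0, 1))
    simp only [flagMul_apply, map_zero, LinearMap.zero_apply, one_smul, zero_add, smul_zero,
      add_zero, mul_zero, zero_smul, zero_mul, mul_one, one_mul] at this
    linear_combination (norm := module) this
  gf1 a b := by
    have := congrArg Prod.fst (h.2.2 (a, 0) (b, 0) (0, 1))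
    simp only [flagMul_apply, map_zero, smul_zero, add_zero, one_smul, zero_add, mul_one, zero_smul,
      zero_mul, flagBr_apply, mul_zero, LinearMap.zero_apply, Prod.mk_sub_mk, sub_zero, sub_self,
      Prod.mk_add_mk, Prod.fst_zero] at this
    linear_combination (norm := module) this
  gf3 a b := by
    have := congrArg Prod.fst (h.2.2 (a, 0) (0, 1) (b, 0))
    simp only [flagMul_apply, map_zero, LinearMap.zero_apply, one_smul, zero_add, smul_zero,
      add_zero, mul_zero, zero_smul, zero_mul, flagBr_apply, Prod.mk_sub_mk, sub_self,
      Prod.mk_add_mk, sub_zero, Prod.fst_zero] at this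
    linear_combination (norm := module) this
  gf5 a := by
    have := congrArg Prod.fst (h.2.2 (a, 0) (0, 1) (0, 1))
    simp only [flagMul_apply, map_zero, LinearMap.zero_apply, smul_zero, add_zero, mul_one,
      one_smul, zero_add, one_mul, flagBr_apply, mul_zero, zero_smul, zero_mul, Prod.mk_sub_mk,
      sub_zero, sub_self, Prod.mk_add_mk, Prod.fst_zero] at this
    linear_combination (norm := module) this

end FlagAlgebra

section Shear
variable {K A : Type*} [Field K] [AddCommGroup A] [Module K A]

/-- `(a, r) ↦ (a + r • a0, β * r)`, the general linear map of `A × K` fixing `A × 0`. -/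
def shear (a0 : A) (β : K) : A × K →ₗ[K] A × K :=
  (LinearMap.fst K A K + LinearMap.toSpanSingleton K A a0 ∘ₗ LinearMap.snd K A K).prod
    (β • LinearMap.snd K A K)

@[simp] theorem shear_apply (a0 : A) (β : K) (a : A) (r : K) :
    shear a0 β (a, r) = (a + r • a0, β * r) := rfl

def shearEquiv (a0 : A) {β : K} (hβ : β ≠ 0) : (A × K) ≃ₗ[K] A × K :=
  LinearEquiv.ofLinearMap (shear a0 β) (shear (-β⁻¹ • a0) β⁻¹)
    (by ext <;> simp [hβ]) (by ext <;> simp [hβ])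

@[simp] theorem coe_shearEquiv (a0 : A) {β : K} (hβ : β ≠ 0) :
    ⇑(shearEquiv a0 hβ) = shear a0 β := rfl

theorem eq_shear_of_apply_inl (τ : A × K →ₗ[K] A × K) (h : ∀ a, τ (a, 0) = (a, 0)) :
    τ = shear (τ (0, 1)).1 (τ (0, 1)).2 := by
  ext <;> simp [h]

variable (circ brk : A →ₗ[K] A →ₗ[K] A)

/-- The relation `≡` on `SF4(A)`. -/
def FlagRel (d d' : FlagData K A) : Prop :=
  ∃ (a0 : A) (β : K), β ≠ 0 ∧
    (∀ a : A, d.S a = β • d'.S a + circ a0 a) ∧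
    (∀ a : A, d.T a = β • d'.T a + circ a a0) ∧
    (d.a1 = circ a0 a0 + β • d'.S a0 + β • d'.T a0 + (β * β) • d'.a1 - d.k • a0) ∧
    (d.k = β * d'.k) ∧
    (∀ a : A, brk a0 a = 0)

variable {circ brk}

theorem flagRel_refl (d : FlagData K A) : FlagRel circ brk d d :=
  ⟨0, 1, one_ne_zero, by simp, by simp, by simp, by simp, by simp⟩

theorem flagRel_iff_intertwines_shear (hanti : ∀ a b, brk a b = -brk b a)
    {d d' : FlagData K A} :
    FlagRel circ brk d d' ↔ ∃ (a0 : A) (β : K), β ≠ 0 ∧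
      Intertwines (shear a0 β) (flagMul circ d) (flagMul circ d') ∧
      Intertwines (shear a0 β) (flagBr brk) (flagBr brk) := by
  constructor
  · rintro ⟨a0, β, hβ, hS, hT, ha1, hk, hbr⟩
    refine ⟨a0, β, hβ, ?_, ?_⟩ <;> rintro ⟨a, s⟩ ⟨b, t⟩ <;>
      simp only [flagMul_apply, flagBr_apply, shear_apply, map_add, map_smul,
        LinearMap.add_apply, LinearMap.smul_apply, Prod.mk.injEq]
    · constructor
      · linear_combination (norm := module) s • hS b + t • hT a + (s * t) • ha1
      · linear_combination (β * s * t) * hk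
    · have hbr' : ∀ a, brk a a0 = 0 := fun a => by rw [hanti, hbr, neg_zero]
      constructor
      · linear_combination (norm := module) -(t • hbr' a) - s • hbr b - (s * t) • hbr a0
      · ring
  · rintro ⟨a0, β, hβ, hm, hb⟩
    have hunit := hm (0, 1) (0, 1)
    simp only [flagMul_apply, map_zero, smul_zero, add_zero, mul_one, one_smul, zero_add, one_mul,
      shear_apply, Prod.mk.injEq] at hunit
    obtain ⟨ha1, hk⟩ := hunit
    refine ⟨a0, β, hβ, fun a => ?_, fun a => ?_, by linear_combination (norm := module) ha1,
      mul_left_cancel₀ hβ (by linear_combination hk), fun a => ?_⟩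
    · have := congrArg Prod.fst (hm (0, 1) (a, 0))
      simp only [flagMul_apply, map_zero, LinearMap.zero_apply, one_smul, zero_add, smul_zero,
        add_zero, mul_zero, zero_smul, zero_mul, shear_apply, mul_one] at this
      linear_combination (norm := module) this
    · have := congrArg Prod.fst (hm (a, 0) (0, 1))
      simp only [flagMul_apply, map_zero, smul_zero, add_zero, one_smul, zero_add, mul_one,
        zero_smul, zero_mul, shear_apply, mul_zero] at this
      linear_combination (norm := module) this
    · simpa using (congrArg Prod.fst (hb (0, 1) (a, 0))).symm

end Shear

section Extraction
variable {K A : Type*} [Field K] [AddCommGroup A] [Module K A] {circ brk : A →ₗ[K] A →ₗ[K] A}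
  {m b : A × K →ₗ[K] A × K →ₗ[K] A × K}

theorem mk_eq_add_smul_unit (a : A) (r : K) : (a, r) = (a, 0) + r • ((0 : A), (1 : K)) := by
  ext <;> simp

theorem apply_eq_zero_of_perfect {N : Type*} [AddCommGroup N] [Module K N]
    (hperf : Submodule.span K {c : A | ∃ a b, c = brk a b} = ⊤) {f : A →ₗ[K] N}
    (hf : ∀ a b, f (brk a b) = 0) (a : A) : f a = 0 :=
  LinearMap.congr_fun (LinearMap.ext_on (f := f) (g := 0) hperf
    (by rintro _ ⟨a, b, rfl⟩; exact hf a b)) a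

/-- `η = 0`. -/
theorem snd_bracket_unit_eq_zero (hperf : Submodule.span K {c : A | ∃ a b, c = brk a b} = ⊤)
    (hGD : IsGD (fun p q => m p q) (fun p q => b p q))
    (hb : ∀ a a', b (a, 0) (a', 0) = (brk a a', 0)) (a : A) : (b (0, 1) (a, 0)).2 = 0 := by
  have hanti := hGD.2.1.anticomm
  have hsnd : ∀ a p, (b (a, 0) p).2 = -(p.2 * (b (0, 1) (a, 0)).2) := by
    rintro a ⟨a', r⟩
    rw [mk_eq_add_smul_unit a' r, map_add, map_smul, hb, hanti (a, 0)]
    simp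
  refine apply_eq_zero_of_perfect hperf
    (f := LinearMap.snd K A K ∘ₗ b (0, 1) ∘ₗ LinearMap.inl K A K) (fun a a' => ?_) a
  have jac := congrArg Prod.snd (hGD.2.1.2 (0, 1) (a, 0) (a', 0))
  beta_reduce at jac
  rw [hb, hanti _ (a', 0), Prod.snd_add, Prod.snd_neg, hsnd, hsnd] at jac
  simp only [LinearMap.comp_apply, LinearMap.inl_apply, LinearMap.snd_apply]
  linear_combination jac

/-- Once `η = 0`, the bracket with `(0, 1)` is a derivation `D` of `A`; writing `D = [a0, ·]`,
the element `(-a0, 1)` brackets trivially with `A`. -/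
theorem exists_bracket_eq_zero (hperf : Submodule.span K {c : A | ∃ a b, c = brk a b} = ⊤)
    (hder : ∀ D : A →ₗ[K] A, (∀ a b, D (brk a b) = brk (D a) b + brk a (D b)) →
      ∃ a0 : A, ∀ a, D a = brk a0 a)
    (hGD : IsGD (fun p q => m p q) (fun p q => b p q))
    (hb : ∀ a a', b (a, 0) (a', 0) = (brk a a', 0)) : ∃ c : A, ∀ a, b (c, 1) (a, 0) = 0 := by
  let D : A →ₗ[K] A := LinearMap.fst K A K ∘ₗ b (0, 1) ∘ₗ LinearMap.inl K A K
  have hD : ∀ a, b (0, 1) (a, 0) = (D a, 0) :=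
    fun a => Prod.ext rfl (snd_bracket_unit_eq_zero hperf hGD hb a)
  obtain ⟨a0, ha0⟩ := hder D fun a a' => by
    have jac := hGD.2.1.2 (0, 1) (a, 0) (a', 0)
    beta_reduce at jac
    simp only [hb, hD] at jac
    simpa using congrArg Prod.fst jac
  refine ⟨-a0, fun a => ?_⟩
  rw [mk_eq_add_smul_unit (-a0) 1, one_smul, map_add, LinearMap.add_apply, hb, hD, ha0]
  simp

theorem eq_flagBr (hGD : IsGD (fun p q => m p q) (fun p q => b p q))
    (hb : ∀ a a', b (a, 0) (a', 0) = (brk a a', 0)) (h0 : ∀ a, b (0, 1) (a, 0) = 0) :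
    b = flagBr brk := by
  have halt : ∀ p, b p p = 0 := hGD.2.1.1
  have hunit : ∀ p, b (0, 1) p = 0 := by
    rintro ⟨a, r⟩
    rw [mk_eq_add_smul_unit a r, map_add, map_smul, h0, halt, smul_zero, add_zero]
  have hunit' : ∀ p, b p (0, 1) = 0 := fun p => by rw [hGD.2.1.anticomm, hunit, neg_zero]
  refine LinearMap.ext₂ fun p q => ?_
  obtain ⟨a, r⟩ := p
  obtain ⟨a', t⟩ := q
  show b (a, r) (a', t) = (brk a a', 0)
  rw [mk_eq_add_smul_unit a r, mk_eq_add_smul_unit a' t]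
  simp only [map_add, map_smul, LinearMap.add_apply, LinearMap.smul_apply, hb, hunit, hunit',
    smul_zero, add_zero]

/-- `p = q = 0`. -/
theorem snd_mul_unit_eq_zero (hperf : Submodule.span K {c : A | ∃ a b, c = brk a b} = ⊤)
    (hGD : IsGD (fun p q => m p q) (fun p q => flagBr brk p q)) (a : A) :
    (m (0, 1) (a, 0)).2 = 0 ∧ (m (a, 0) (0, 1)).2 = 0 := by
  constructor
  · refine apply_eq_zero_of_perfect hperf
      (f := LinearMap.snd K A K ∘ₗ m (0, 1) ∘ₗ LinearMap.inl K A K) (fun a a' => ?_) a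
    simpa [Prod.mk_zero_zero] using congrArg Prod.snd (hGD.2.2 (a, 0) (0, 1) (a', 0))
  · refine apply_eq_zero_of_perfect hperf
      (f := LinearMap.snd K A K ∘ₗ m.flip (0, 1) ∘ₗ LinearMap.inl K A K) (fun a a' => ?_) a
    simpa [Prod.mk_zero_zero] using congrArg Prod.snd (hGD.2.2 (0, 1) (a, 0) (a', 0))

def toFlagData (m : A × K →ₗ[K] A × K →ₗ[K] A × K) : FlagData K A where
  p := 0
  q := 0
  S := LinearMap.fst K A K ∘ₗ m (0, 1) ∘ₗ LinearMap.inl K A K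
  T := LinearMap.fst K A K ∘ₗ m.flip (0, 1) ∘ₗ LinearMap.inl K A K
  a1 := (m (0, 1) (0, 1)).1
  k := (m (0, 1) (0, 1)).2
  eta := 0
  D := 0

theorem eq_flagMul (hm : ∀ a a', m (a, 0) (a', 0) = (circ a a', 0))
    (hS : ∀ a, (m (0, 1) (a, 0)).2 = 0) (hT : ∀ a, (m (a, 0) (0, 1)).2 = 0) :
    m = flagMul circ (toFlagData m) := by
  refine LinearMap.ext₂ fun p q => ?_
  obtain ⟨a, r⟩ := p
  obtain ⟨a', t⟩ := q
  rw [flagMul_apply, mk_eq_add_smul_unit a r, mk_eq_add_smul_unit a' t]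
  simp only [map_add, map_smul, LinearMap.add_apply, LinearMap.smul_apply, hm]
  ext
  · simp only [smul_add, Prod.fst_add, Prod.smul_fst, toFlagData, LinearMap.coe_comp,
      LinearMap.coe_fst, LinearMap.coe_inl, Function.comp_apply, LinearMap.flip_apply]
    module
  · simp only [smul_add, Prod.snd_add, Prod.smul_snd, hS, smul_eq_mul, mul_zero, add_zero, hT,
      zero_add, toFlagData]
    ring

theorem exists_shear_intertwines (hperf : Submodule.span K {c : A | ∃ a b, c = brk a b} = ⊤)
    (hder : ∀ D : A →ₗ[K] A, (∀ a b, D (brk a b) = brk (D a) b + brk a (D b)) →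
      ∃ a0 : A, ∀ a, D a = brk a0 a)
    (hGD : IsGD (fun p q => m p q) (fun p q => b p q))
    (hm : ∀ a a', m (a, 0) (a', 0) = (circ a a', 0))
    (hb : ∀ a a', b (a, 0) (a', 0) = (brk a a', 0)) :
    ∃ (c : A) (d : FlagData K A), d.p = 0 ∧ d.q = 0 ∧ d.eta = 0 ∧ d.D = 0 ∧
      Intertwines (shear c 1) (flagMul circ d) m ∧ Intertwines (shear c 1) (flagBr brk) b := by
  obtain ⟨c, hc⟩ := exists_bracket_eq_zero hperf hder hGD hb
  set σ := shearEquiv c (one_ne_zero : (1 : K) ≠ 0)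
  have hσ : ∀ a, σ.symm (a, 0) = (a, 0) := fun a => σ.symm_apply_eq.2 (by simp [σ])
  have hGD' := hGD.of_intertwines σ (intertwines_pullback₂ σ m) (intertwines_pullback₂ σ b)
  have hm' : ∀ a a', pullback₂ σ m (a, 0) (a', 0) = (circ a a', 0) := fun a a' => by
    simp [pullback₂_apply, σ, hm, hσ]
  have hb' : ∀ a a', pullback₂ σ b (a, 0) (a', 0) = (brk a a', 0) := fun a a' => by
    simp [pullback₂_apply, σ, hb, hσ]
  have hbr : pullback₂ σ b = flagBr brk :=
    eq_flagBr hGD' hb' fun a => by simp [pullback₂_apply, σ, hc]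
  rw [hbr] at hGD'
  have hmul := eq_flagMul hm' (fun a => (snd_mul_unit_eq_zero hperf hGD' a).1)
    (fun a => (snd_mul_unit_eq_zero hperf hGD' a).2)
  refine ⟨c, toFlagData (pullback₂ σ m), rfl, rfl, rfl, rfl, ?_, ?_⟩
  · rw [← hmul]
    exact intertwines_pullback₂ σ m
  · rw [← hbr]
    exact intertwines_pullback₂ σ b

end Extraction

section Extension
variable {K E : Type*} [Field K] [AddCommGroup E] [Module K E] {A : Submodule K E} {x : E}

noncomputable def splitEquiv (hx : x ∉ A) (hc : IsCompl A (K ∙ x)) : (A × K) ≃ₗ[K] E :=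
  ((LinearEquiv.refl K A).prodCongr
    (LinearEquiv.toSpanNonzeroSingleton K E x (by rintro rfl; exact hx A.zero_mem))).trans
    (Submodule.prodEquivOfIsCompl A (K ∙ x) hc)

@[simp] theorem splitEquiv_apply (hx : x ∉ A) (hc : IsCompl A (K ∙ x)) (p : A × K) :
    splitEquiv hx hc p = p.1 + p.2 • x := by
  simp [splitEquiv]

@[simp] theorem splitEquiv_symm_coe (hx : x ∉ A) (hc : IsCompl A (K ∙ x)) (a : A) :
    (splitEquiv hx hc).symm a = (a, 0) :=
  (splitEquiv hx hc).symm_apply_eq.2 (by simp)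

variable {circ brk : A →ₗ[K] A →ₗ[K] A}

/-- `e` is an isomorphism from the unified product `A ♮ K` of `d` onto `(E, s)` which is the
identity on `A`. -/
structure IsFlagPresentation (e : (A × K) ≃ₗ[K] E) (s : GDStrOn A circ brk)
    (d : FlagData K A) : Prop where
  apply_inl : ∀ a : A, e (a, 0) = a
  mul : Intertwines e (flagMul circ d) s.1.1
  br : Intertwines e (flagBr brk) s.1.2

theorem exists_isFlagPresentation (hx : x ∉ A) (hc : IsCompl A (K ∙ x))
    (hperf : Submodule.span K {c : A | ∃ a b, c = brk a b} = ⊤)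
    (hder : ∀ D : A →ₗ[K] A, (∀ a b, D (brk a b) = brk (D a) b + brk a (D b)) →
      ∃ a0 : A, ∀ a, D a = brk a0 a) (s : GDStrOn A circ brk) :
    ∃ (d : FlagData K A) (e : (A × K) ≃ₗ[K] E),
      (IsFlagDatum circ brk d ∧ d.p = 0 ∧ d.q = 0 ∧ d.eta = 0 ∧ d.D = 0) ∧
      IsFlagPresentation e s d := by
  set ι := splitEquiv hx hc
  obtain ⟨hGD, hres⟩ := s.2
  have hm : ∀ a a', pullback₂ ι s.1.1 (a, 0) (a', 0) = (circ a a', 0) := fun a a' => by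
    simp [pullback₂_apply, ι, (hres a a').1]
  have hb : ∀ a a', pullback₂ ι s.1.2 (a, 0) (a', 0) = (brk a a', 0) := fun a a' => by
    simp [pullback₂_apply, ι, (hres a a').2]
  obtain ⟨c, d, hp, hq, he, hD, hmul, hbr⟩ := exists_shear_intertwines hperf hder
    (hGD.of_intertwines ι (intertwines_pullback₂ ι _) (intertwines_pullback₂ ι _)) hm hb
  set e := (shearEquiv c (one_ne_zero : (1 : K) ≠ 0)).trans ι
  have hmul' : Intertwines e (flagMul circ d) s.1.1 := (intertwines_pullback₂ ι _).comp hmul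
  have hbr' : Intertwines e (flagBr brk) s.1.2 := (intertwines_pullback₂ ι _).comp hbr
  have hd := IsReducedFlag.of_isGD (hGD.of_intertwines e hmul' hbr')
  exact ⟨d, e, ⟨(isFlagDatum_iff_isReducedFlag hp hq he hD).2 hd, hp, hq, he, hD⟩,
    ⟨fun a => by simp [e, ι], hmul', hbr'⟩⟩

noncomputable def flagStr (hx : x ∉ A) (hc : IsCompl A (K ∙ x))
    (hGD : IsGD (fun a b => circ a b) (fun a b => brk a b)) {d : FlagData K A}
    (hd : IsReducedFlag circ brk d) : GDStrOn A circ brk :=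
  ⟨(pullback₂ (splitEquiv hx hc).symm (flagMul circ d),
      pullback₂ (splitEquiv hx hc).symm (flagBr brk)),
    (isGD_flag hGD hd).of_intertwines _ (intertwines_pullback₂ _ _) (intertwines_pullback₂ _ _),
    fun a b => ⟨by simp [pullback₂_apply], by simp [pullback₂_apply]⟩⟩

theorem isFlagPresentation_flagStr (hx : x ∉ A) (hc : IsCompl A (K ∙ x))
    (hGD : IsGD (fun a b => circ a b) (fun a b => brk a b)) {d : FlagData K A}
    (hd : IsReducedFlag circ brk d) :
    IsFlagPresentation (splitEquiv hx hc) (flagStr hx hc hGD hd) d :=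
  ⟨by simp, (intertwines_pullback₂ (splitEquiv hx hc).symm (flagMul circ d)).symm,
    (intertwines_pullback₂ (splitEquiv hx hc).symm (flagBr brk)).symm⟩

theorem gdStrEquiv_refl (s : GDStrOn A circ brk) : GDStrEquiv A circ brk s s :=
  ⟨LinearEquiv.refl K E, fun _ _ => rfl, fun _ _ => rfl, fun _ => rfl⟩

theorem gdStrEquiv_iff_flagRel (hanti : ∀ a b, brk a b = -brk b a)
    {s s' : GDStrOn A circ brk} {d d' : FlagData K A} {e e' : (A × K) ≃ₗ[K] E}
    (he : IsFlagPresentation e s d) (he' : IsFlagPresentation e' s' d') :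
    GDStrEquiv A circ brk s s' ↔ FlagRel circ brk d d' := by
  rw [flagRel_iff_intertwines_shear hanti]
  constructor
  · rintro ⟨φ, hφm, hφb, hφA⟩
    set τ := (e.trans φ).trans e'.symm
    have hτ : ∀ a, τ (a, 0) = (a, 0) := fun a => by
      simp [τ, he.apply_inl, hφA, e'.symm_apply_eq, he'.apply_inl]
    have hτm : Intertwines τ (flagMul circ d) (flagMul circ d') :=
      he'.mul.symm.comp ((show Intertwines φ s.1.1 s'.1.1 from hφm).comp he.mul)
    have hτb : Intertwines τ (flagBr brk) (flagBr brk) :=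
      he'.br.symm.comp ((show Intertwines φ s.1.2 s'.1.2 from hφb).comp he.br)
    have hshear : ⇑τ = shear (τ (0, 1)).1 (τ (0, 1)).2 :=
      congrArg DFunLike.coe (eq_shear_of_apply_inl τ.toLinearMap hτ)
    rw [hshear] at hτm hτb
    refine ⟨_, _, fun h0 => ?_, hτm, hτb⟩
    have : τ (0, 1) = τ ((τ (0, 1)).1, 0) := by rw [hτ]; exact Prod.ext rfl h0
    exact one_ne_zero (congrArg Prod.snd (τ.injective this))
  · rintro ⟨a0, β, hβ, hm, hb⟩
    refine ⟨(e.symm.trans (shearEquiv a0 hβ)).trans e', he'.mul.comp (hm.comp he.mul.symm),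
      he'.br.comp (hb.comp he.br.symm), fun a => ?_⟩
    simp [e.symm_apply_eq.2 (he.apply_inl a).symm, he'.apply_inl]

end Extension

/-- Corollary, part 2: if the Lie algebra `(A,[·,·])` is perfect and all its
derivations are inner, then `Extd(E,A)` is in bijection with `SF4(A)/≡`. -/
theorem extd_bijection_SF4
    {K E : Type*} [Field K] [AddCommGroup E] [Module K E]
    (A : Submodule K E) (x : E) (hx : x ∉ A) (hc : IsCompl A (K ∙ x))
    (circ brk : ↥A →ₗ[K] ↥A →ₗ[K] ↥A)
    (hGD : IsGD (fun a b => circ a b) (fun a b => brk a b))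
    -- the Lie algebra (A, [·,·]) is perfect
    (hperf : Submodule.span K {c : ↥A | ∃ a b : ↥A, c = brk a b} = ⊤)
    -- all derivations of (A, [·,·]) are inner
    (hder : ∀ D : ↥A →ₗ[K] ↥A,
      (∀ a b : ↥A, D (brk a b) = brk (D a) b + brk a (D b)) →
      ∃ a0 : ↥A, ∀ a : ↥A, D a = brk a0 a) :
    Nonempty
      (Quot (fun d d' : {d : FlagData K ↥A // IsFlagDatum circ brk d ∧
               d.p = 0 ∧ d.q = 0 ∧ d.eta = 0 ∧ d.D = 0} =>
          -- equivalence on SF4(A)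
          ∃ (a0 : ↥A) (β : K), β ≠ 0 ∧
            (∀ a : ↥A, d.1.S a = β • d'.1.S a + circ a0 a) ∧
            (∀ a : ↥A, d.1.T a = β • d'.1.T a + circ a a0) ∧
            (d.1.a1 = circ a0 a0 + β • d'.1.S a0 + β • d'.1.T a0
              + (β * β) • d'.1.a1 - d.1.k • a0) ∧
            (d.1.k = β * d'.1.k) ∧
            (∀ a : ↥A, brk a0 a = 0))
      ≃ Quot (GDStrEquiv A circ brk)) := by
  have hanti := hGD.2.1.anticomm
  choose dat pres hdat hpres using exists_isFlagPresentation hx hc hperf hder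
  let Φ (d : SF4 circ brk) : GDStrOn A circ brk := flagStr hx hc hGD d.isReducedFlag
  let Ψ (s : GDStrOn A circ brk) : SF4 circ brk := ⟨dat s, hdat s⟩
  have hΦ (d : SF4 circ brk) : IsFlagPresentation (splitEquiv hx hc) (Φ d) d.1 :=
    isFlagPresentation_flagStr hx hc hGD d.isReducedFlag
  exact ⟨quotEquivOfRel (r := fun d d' : SF4 circ brk => FlagRel circ brk d.1 d'.1) Φ Ψ
    (fun d d' => (gdStrEquiv_iff_flagRel hanti (hΦ d) (hΦ d')).2)
    (fun s s' => (gdStrEquiv_iff_flagRel hanti (hpres s) (hpres s')).1)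
    (fun d => (gdStrEquiv_iff_flagRel hanti (hpres (Φ d)) (hΦ d)).1 (gdStrEquiv_refl _))
    (fun s => (gdStrEquiv_iff_flagRel hanti (hΦ (Ψ s)) (hpres s)).2 (flagRel_refl _))⟩

end GDExt
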